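/- Let A be a real m × n matrix, b ∈ ℝ^m, and μ > 0. Suppose x̂ ∈ ℝⁿ satisfies A x̂ = b, |x̂_i| ≠ μ for all i = 1, …, n, and there exists ŷ ∈ ℝ^m such that (2/μ²)(𝟏 − H_μ(x̂)) ∘ x̂ + Aᵀ ŷ = 0. Then there exists ρ > 0 such that for every v ∈ ℝⁿ with A v = 0 and ‖v‖_∞ ≤ ρ, one has Φ_μ(x̂ + v) ≥ Φ_μ(x̂); in particular, x̂ is a local minimizer of Φ_μ over {x ∈ ℝⁿ : A x = b}. -/

import Mathlib

/-- Scalar truncated Huber function: φ_μ(t) = min(1, t²/μ²). -/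
noncomputable def phiTH (μ t : ℝ) : ℝ := min 1 (t ^ 2 / μ ^ 2)

/-- Truncated Huber penalty: Φ_μ(x) = Σ_i φ_μ(x_i). -/
noncomputable def PhiTH {n : ℕ} (μ : ℝ) (x : Fin n → ℝ) : ℝ := ∑ i, phiTH μ (x i)

/-- Filter operator H_μ: (H_μ(x))_i = 0 if |x_i| ≤ μ, and 1 if |x_i| > μ. -/
noncomputable def Hfilter {n : ℕ} (μ : ℝ) (x : Fin n → ℝ) : Fin n → ℝ :=
  fun i => if μ < |x i| then 1 else 0

/-! Near `x̂`, each coordinate with `|x̂ᵢ| > μ` stays in the region where `φ_μ ≡ 1`, and each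
coordinate with `|x̂ᵢ| < μ` stays in the region where `φ_μ(t) = t²/μ²`, a convex function lying
above its tangent line. Hence `Φ_μ(x̂ + v) ≥ Φ_μ(x̂) + g ⬝ᵥ v` with
`g = (2/μ²)(𝟏 − H_μ(x̂)) ∘ x̂`, and `g ⬝ᵥ v = -(Aᵀŷ) ⬝ᵥ v = -ŷ ⬝ᵥ Av = 0` when `Av = 0`. -/

open Matrix

lemma exists_pos_forall_le {ι : Type*} [Finite ι] (r : ι → ℝ) (hr : ∀ i, 0 < r i) :
    ∃ ρ > 0, ∀ i, ρ ≤ r i := by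
  cases isEmpty_or_nonempty ι
  · exact ⟨1, one_pos, isEmptyElim⟩
  · obtain ⟨j, hj⟩ := Finite.exists_min r
    exact ⟨r j, hr j, hj⟩

lemma dotProduct_eq_zero_of_add_transpose_mulVec_eq_zero {R m n : Type*} [CommRing R]
    [Fintype m] [Fintype n] {A : Matrix m n R} {g v : n → R} {y : m → R}
    (hg : g + Aᵀ *ᵥ y = 0) (hv : A *ᵥ v = 0) : g ⬝ᵥ v = 0 := by
  rw [eq_neg_of_add_eq_zero_left hg, neg_dotProduct, mulVec_transpose, ← dotProduct_mulVec, hv,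
    dotProduct_zero, neg_zero]

lemma phiTH_eq_one {μ t : ℝ} (hμ : 0 < μ) (h : μ ≤ |t|) : phiTH μ t = 1 := by
  refine min_eq_left ((one_le_div₀ (by positivity)).2 ?_)
  rw [← sq_abs t]
  exact pow_le_pow_left₀ hμ.le h 2

lemma phiTH_eq_sq_div {μ t : ℝ} (h : |t| ≤ μ) : phiTH μ t = t ^ 2 / μ ^ 2 := by
  refine min_eq_right (div_le_one_of_le₀ ?_ (sq_nonneg μ))
  rw [← sq_abs t]
  exact pow_le_pow_left₀ (abs_nonneg t) h 2

lemma phiTH_add_eq_of_add_abs_le {μ t s : ℝ} (hμ : 0 < μ) (h : μ + |s| ≤ |t|) :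
    phiTH μ (t + s) = phiTH μ t := by
  have hts : μ ≤ |t + s| := by
    have := abs_sub_abs_le_abs_sub t (-s)
    rw [abs_neg, sub_neg_eq_add] at this
    linarith
  rw [phiTH_eq_one hμ hts, phiTH_eq_one hμ (by linarith [abs_nonneg s])]

lemma phiTH_add_ge_of_abs_add_abs_le {μ t s : ℝ} (h : |t| + |s| ≤ μ) :
    phiTH μ t + 2 / μ ^ 2 * t * s ≤ phiTH μ (t + s) := by
  rw [phiTH_eq_sq_div (by linarith [abs_nonneg s]),
    phiTH_eq_sq_div ((abs_add_le t s).trans h)]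
  have : t ^ 2 / μ ^ 2 + 2 / μ ^ 2 * t * s = (t + s) ^ 2 / μ ^ 2 - s ^ 2 / μ ^ 2 := by ring
  rw [this]
  exact sub_le_self _ (by positivity)

lemma PhiTH_add_ge {n : ℕ} {μ : ℝ} (hμ : 0 < μ) {x v : Fin n → ℝ} (hx : ∀ i, |x i| ≠ μ)
    (hv : ∀ i, |v i| ≤ |(|x i| - μ)|) :
    PhiTH μ x + (fun i => (2 / μ ^ 2) * (1 - Hfilter μ x i) * x i) ⬝ᵥ v ≤ PhiTH μ (x + v) := by
  rw [PhiTH, PhiTH, dotProduct, ← Finset.sum_add_distrib]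
  refine Finset.sum_le_sum fun i _ => ?_
  have hvi := hv i
  rcases (hx i).lt_or_gt with hlt | hgt
  · rw [abs_of_neg (sub_neg.2 hlt)] at hvi
    simpa [Hfilter, hlt.not_gt, mul_assoc] using
      phiTH_add_ge_of_abs_add_abs_le (show |x i| + |v i| ≤ μ by linarith)
  · rw [abs_of_pos (sub_pos.2 hgt)] at hvi
    simp [Hfilter, hgt, phiTH_add_eq_of_add_abs_le hμ (show μ + |v i| ≤ |x i| by linarith)]

theorem stmt14_general {m n : ℕ} (A : Matrix (Fin m) (Fin n) ℝ)
    (μ : ℝ) (hμ : 0 < μ) (xh : Fin n → ℝ)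
    (hne : ∀ i, |xh i| ≠ μ)
    (hy : ∃ yh : Fin m → ℝ,
      (fun i => (2 / μ ^ 2) * (1 - Hfilter μ xh i) * xh i) + A.transpose.mulVec yh = 0) :
    ∃ ρ > 0, ∀ v : Fin n → ℝ, A.mulVec v = 0 → ‖v‖ ≤ ρ →
      PhiTH μ xh ≤ PhiTH μ (xh + v) := by
  obtain ⟨yh, hyh⟩ := hy
  obtain ⟨ρ, hρ, hρle⟩ := exists_pos_forall_le (fun i => |(|xh i| - μ)|)
    fun i => abs_pos.2 (sub_ne_zero.2 (hne i))
  refine ⟨ρ, hρ, fun v hv hvρ => ?_⟩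
  have hvi : ∀ i, |v i| ≤ |(|xh i| - μ)| := fun i =>
    (norm_le_pi_norm v i).trans (hvρ.trans (hρle i))
  calc PhiTH μ xh
      = PhiTH μ xh + (fun i => (2 / μ ^ 2) * (1 - Hfilter μ xh i) * xh i) ⬝ᵥ v := by
        rw [dotProduct_eq_zero_of_add_transpose_mulVec_eq_zero hyh hv, add_zero]
    _ ≤ PhiTH μ (xh + v) := PhiTH_add_ge hμ hne hvi

/-- Note: the norm `‖v‖` on `Fin n → ℝ` is the sup norm `‖v‖_∞ = max_i |v_i|`. -/
theorem stmt14 {m n : ℕ} (A : Matrix (Fin m) (Fin n) ℝ) (b : Fin m → ℝ)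
    (μ : ℝ) (hμ : 0 < μ) (xh : Fin n → ℝ)
    (hfeas : A.mulVec xh = b) (hne : ∀ i, |xh i| ≠ μ)
    (hy : ∃ yh : Fin m → ℝ,
      (fun i => (2 / μ ^ 2) * (1 - Hfilter μ xh i) * xh i) + A.transpose.mulVec yh = 0) :
    ∃ ρ > 0, ∀ v : Fin n → ℝ, A.mulVec v = 0 → ‖v‖ ≤ ρ →
      PhiTH μ xh ≤ PhiTH μ (xh + v) :=
  stmt14_general A μ hμ xh hne hy
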